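/- Consider a finite recurrent MDP on S that is skip-free in the negative direction on the tree. Let d be a fixed stationary deterministic policy and x = g(d). Let a_i and y_i (i ≠ 0) come from the downward recursion y_i = min_{a∈A} (c_i(a) − x + ∑_{k∈D(i)} p̄_{ik}(a) y_k)/p_{iρ(i)}(a) with a_i attaining the minimum, and let t_i be defined by t_i = (1 + ∑_{k∈D(i)} p̄_{ik}(a_i) t_k)/p_{iρ(i)}(a_i). Let a_0¹ = argmin_a (c_0(a) − x + ∑_{k∈D(0)} p̄_{0k}(a) y_k)/(1 − p_{00}(a)); a_0² = argmin_a { c_0(a) − x + ∑_{k∈D(0)} p̄_{0k}(a) y_k }; a_0³ = argmin_a (c_0(a) − x + ∑_{k∈D(0)} p̄_{0k}(a) y_k)/(1 + ∑_{k∈D(0)} p̄_{0k}(a) t_k). For k = 1,2,3 let dᵏ be the policy taking action a_i in each i ≠ 0 and action a_0ᵏ in state 0. Then either (i) g(dᵏ) < g(d) for all k ∈ {1,2,3}, or (ii) g(dᵏ) = g(d) for all k ∈ {1,2,3} and each dᵏ, as well as d itself, is an average cost optimal policy (achieves the minimum of g(d') over all stationary deterministic policies d'). -/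

import Mathlib

open Finset Filter

noncomputable section

/-- A rooted tree structure on a state space `S`: a root, a parent map fixing the root,
such that iterating the parent map from any state reaches the root. -/
structure SFTree (S : Type*) where
  root : S
  parent : S → S
  parent_root : parent root = root
  reaches_root : ∀ i : S, ∃ n : ℕ, parent^[n] i = root

namespace SFTree

variable {S : Type*} [Fintype S] [DecidableEq S]

open Classical in
/-- The set of descendants of `i`: states `j ≠ i` whose path to the root passes through `i`. -/
def desc (T : SFTree S) (i : S) : Finset S :=
  Finset.univ.filter fun j => j ≠ i ∧ ∃ n : ℕ, T.parent^[n] j = i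

open Classical in
/-- The subtree rooted at `i`: `i` together with its descendants. -/
def subtree (T : SFTree S) (i : S) : Finset S :=
  Finset.univ.filter fun j => ∃ n : ℕ, T.parent^[n] j = i

open Classical in
/-- The states strictly after `i` on the path from `i` to `j`. -/
def delta (T : SFTree S) (i j : S) : Finset S :=
  Finset.univ.filter fun r =>
    r ≠ i ∧ (∃ n : ℕ, T.parent^[n] j = r) ∧ (∃ m : ℕ, T.parent^[m] r = i)

end SFTree

/-- A finite Markov decision process: costs and transition probabilities. -/
structure MDP (S A : Type*) [Fintype S] where
  c : S → A → ℝ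
  p : S → A → S → ℝ
  p_nonneg : ∀ i a j, 0 ≤ p i a j
  p_sum_one : ∀ i a, ∑ j, p i a j = 1

namespace MDP

variable {S A : Type*} [Fintype S] [DecidableEq S]

/-- Tail probability: the probability of jumping from `i` into the subtree rooted at `k`. -/
def ptail (M : MDP S A) (T : SFTree S) (i : S) (a : A) (k : S) : ℝ :=
  ∑ s ∈ T.subtree k, M.p i a s

/-- Skip-free in the negative direction on the tree `T`: from `i ≠ root` the only possible
transitions are to the parent of `i` or into the subtree rooted at `i`. -/
def IsSkipFree (M : MDP S A) (T : SFTree S) : Prop :=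
  ∀ i, i ≠ T.root → ∀ a j, M.p i a j ≠ 0 → j = T.parent i ∨ j ∈ T.subtree i

/-- Transition matrix of the stationary deterministic policy `d`. -/
def Pmat (M : MDP S A) (d : S → A) : Matrix S S ℝ :=
  Matrix.of fun i j => M.p i (d i) j

/-- Cost vector of the stationary deterministic policy `d`. -/
def cvec (M : MDP S A) (d : S → A) : S → ℝ := fun i => M.c i (d i)

/-- Expected average cost of the stationary deterministic policy `d` starting from `i`. -/
def avgCost (M : MDP S A) (d : S → A) (i : S) : ℝ :=
  Filter.limsup
    (fun n : ℕ => (n : ℝ)⁻¹ * ∑ t ∈ Finset.range n, ((M.Pmat d ^ t).mulVec (M.cvec d)) i)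
    Filter.atTop

end MDP

/-- A (substochastic) matrix is irreducible if every state can reach every other state
in a positive number of steps. -/
def MatIrreducible {S : Type*} [Fintype S] [DecidableEq S] (P : Matrix S S ℝ) : Prop :=
  ∀ i j, ∃ n : ℕ, 0 < n ∧ 0 < (P ^ n) i j

/-- A recurrent model: every stationary deterministic policy has an irreducible
transition matrix. -/
def IsRecurrentModel {S A : Type*} [Fintype S] [DecidableEq S] (M : MDP S A) : Prop :=
  ∀ d : S → A, MatIrreducible (M.Pmat d)

/-- The probability weight of a path of length `n`. -/
def pathWt {S : Type*} [Fintype S] (P : Matrix S S ℝ) {n : ℕ} (x : Fin (n + 1) → S) : ℝ :=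
  ∏ t : Fin n, P (x t.castSucc) (x t.succ)

open Classical in
/-- `E[f(X_n); τ > n]` for the chain with matrix `P` started at `z`, where `τ` is the
first-return epoch to `z` (the first time the chain enters `z` from a state `≠ z`). -/
def retTerm {S : Type*} [Fintype S] (P : Matrix S S ℝ) (z : S) (f : S → ℝ) (n : ℕ) : ℝ :=
  ∑ x ∈ Finset.univ.filter
      (fun (x : Fin (n + 1) → S) =>
        x 0 = z ∧ ∀ t : Fin n, ¬(x t.castSucc ≠ z ∧ x t.succ = z)),
    pathWt P x * f (x (Fin.last n))

/-- `E[∑_{t=0}^{τ-1} f(X_t)]` for the chain with matrix `P` started at `z`, where `τ` is the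
first-return epoch to `z`. -/
def retSum {S : Type*} [Fintype S] (P : Matrix S S ℝ) (z : S) (f : S → ℝ) : ℝ :=
  ∑' n : ℕ, retTerm P z f n

open Classical in
/-- `E[f(X_n); σ > n]` for the chain with matrix `P` started at `i`, where `σ` is the
first-passage epoch to `z`, `σ = min {t > 0 : X_t = z}`. -/
def passTerm {S : Type*} [Fintype S] (P : Matrix S S ℝ) (i z : S) (f : S → ℝ) (n : ℕ) : ℝ :=
  ∑ x ∈ Finset.univ.filter
      (fun (x : Fin (n + 1) → S) => x 0 = i ∧ ∀ t : Fin n, x t.succ ≠ z),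
    pathWt P x * f (x (Fin.last n))

/-- `E[∑_{t=0}^{σ-1} f(X_t)]` for the chain with matrix `P` started at `i`, where `σ` is the
first-passage epoch to `z`. -/
def passSum {S : Type*} [Fintype S] (P : Matrix S S ℝ) (i z : S) (f : S → ℝ) : ℝ :=
  ∑' n : ℕ, passTerm P i z f n

end

/-!
Write `B(a) = c₀(a) - x + ∑_{k ∈ D(0)} p̄₀ₖ(a) yₖ` and `τ(a) = 1 + ∑_{k ∈ D(0)} p̄₀ₖ(a) tₖ`.
Summing `y` along the path from the root to `j` gives a potential `h` for which skip-freeness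
yields `∑ⱼ pᵢⱼ(a) hⱼ = hᵢ - p_{iρ(i)}(a) yᵢ + ∑_{k ∈ D(i)} p̄ᵢₖ(a) yₖ` at every `i ≠ 0`, so the
recursions for `y` and `t` turn into Poisson equations. Hence a policy using the actions `aᵢ` off
the root and `a` at the root has average cost `x + B(a) / τ(a)`; and if `B ≥ 0`, then `h` is a
Poisson subsolution with gain `x` for every policy, so `x` is optimal. The same formula for `d`
itself, whose own relative values dominate `y`, gives `B(d(0)) ≤ 0`. As all denominators are
positive, the three root actions make `B` negative when `min B < 0` and zero when `min B = 0`.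
-/

namespace SFTree

variable {S : Type*} {T : SFTree S}

lemma eq_root_of_iterate_parent_eq_self {i : S} {n : ℕ} (h : T.parent^[n] i = i)
    (hn : 0 < n) : i = T.root := by
  obtain ⟨N, hN⟩ := T.reaches_root i
  have hper : Function.IsPeriodicPt T.parent (n * N) i :=
    Function.IsPeriodicPt.mul_const h N
  rw [← hper.eq, ← Nat.sub_add_cancel (Nat.le_mul_of_pos_left N hn), Function.iterate_add_apply,
    hN, Function.iterate_fixed T.parent_root]

variable [Fintype S]

@[simp]
lemma mem_subtree {i j : S} : j ∈ T.subtree i ↔ ∃ n, T.parent^[n] j = i := by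
  simp [subtree]

lemma self_mem_subtree (i : S) : i ∈ T.subtree i := mem_subtree.2 ⟨0, rfl⟩

lemma mem_subtree_trans {i j k : S} (hij : j ∈ T.subtree i) (hik : i ∈ T.subtree k) :
    j ∈ T.subtree k := by
  obtain ⟨n, rfl⟩ := mem_subtree.1 hij
  obtain ⟨m, rfl⟩ := mem_subtree.1 hik
  exact mem_subtree.2 ⟨m + n, Function.iterate_add_apply _ _ _ _⟩

lemma eq_of_mem_subtree_of_mem_subtree {i k : S} (hik : i ∈ T.subtree k)
    (hki : k ∈ T.subtree i) : i = k := by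
  obtain ⟨n, rfl⟩ := mem_subtree.1 hik
  obtain ⟨m, hm⟩ := mem_subtree.1 hki
  rcases Nat.eq_zero_or_pos (m + n) with h | h
  · obtain rfl : n = 0 := by omega
    rfl
  · have hroot := eq_root_of_iterate_parent_eq_self (by rwa [Function.iterate_add_apply]) h
    rw [hroot, Function.iterate_fixed T.parent_root]

lemma mem_subtree_or_mem_subtree {i j k : S} (hi : j ∈ T.subtree i) (hk : j ∈ T.subtree k) :
    i ∈ T.subtree k ∨ k ∈ T.subtree i := by
  obtain ⟨n, rfl⟩ := mem_subtree.1 hi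
  obtain ⟨m, rfl⟩ := mem_subtree.1 hk
  rcases le_total n m with hnm | hmn
  · refine Or.inl (mem_subtree.2 ⟨m - n, ?_⟩)
    rw [← Function.iterate_add_apply, Nat.sub_add_cancel hnm]
  · refine Or.inr (mem_subtree.2 ⟨n - m, ?_⟩)
    rw [← Function.iterate_add_apply, Nat.sub_add_cancel hmn]

lemma parent_mem_subtree {i k : S} (h : i ∈ T.subtree k) (hne : i ≠ k) :
    T.parent i ∈ T.subtree k := by
  obtain ⟨_ | n, hn⟩ := mem_subtree.1 h
  · exact absurd hn hne
  · exact mem_subtree.2 ⟨n, hn⟩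

lemma parent_not_mem_subtree {i : S} (hi : i ≠ T.root) : T.parent i ∉ T.subtree i := by
  intro h
  obtain ⟨n, hn⟩ := mem_subtree.1 h
  exact hi (eq_root_of_iterate_parent_eq_self (n := n + 1) hn n.succ_pos)

variable [DecidableEq S]

lemma mem_desc {i j : S} : j ∈ T.desc i ↔ j ≠ i ∧ j ∈ T.subtree i := by
  simp [desc]

lemma mem_desc_root {j : S} : j ∈ T.desc T.root ↔ j ≠ T.root := by
  rw [mem_desc]
  exact ⟨And.left, fun h => ⟨h, mem_subtree.2 (T.reaches_root j)⟩⟩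

lemma mem_delta_root {i r : S} : r ∈ T.delta T.root i ↔ r ≠ T.root ∧ i ∈ T.subtree r := by
  simp [delta, T.reaches_root]

lemma ne_root_of_mem_desc {i k : S} (h : k ∈ T.desc i) : k ≠ T.root := by
  rintro rfl
  obtain ⟨hne, hsub⟩ := mem_desc.1 h
  obtain ⟨n, hn⟩ := mem_subtree.1 hsub
  exact hne ((Function.iterate_fixed T.parent_root n).symm.trans hn)

lemma card_desc_lt {i k : S} (h : k ∈ T.desc i) : (T.desc k).card < (T.desc i).card := by
  refine Finset.card_lt_card ⟨fun j hj => ?_, fun hsub => (mem_desc.1 (hsub h)).1 rfl⟩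
  rw [mem_desc] at h hj ⊢
  refine ⟨?_, mem_subtree_trans hj.2 h.2⟩
  rintro rfl
  exact h.1 (eq_of_mem_subtree_of_mem_subtree h.2 hj.2)

theorem desc_induction (T : SFTree S) {P : S → Prop} (h : ∀ i, (∀ k ∈ T.desc i, P k) → P i)
    (i : S) : P i := by
  induction hn : (T.desc i).card using Nat.strong_induction_on generalizing i with
  | _ n ih => exact h i fun k hk => ih _ (hn ▸ card_desc_lt hk) k rfl

noncomputable def pathSum (T : SFTree S) (y : S → ℝ) (j : S) : ℝ :=
  ∑ r ∈ T.delta T.root j, y r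

lemma pathSum_root (T : SFTree S) (y : S → ℝ) : T.pathSum y T.root = 0 := by
  refine Finset.sum_eq_zero fun r hr => absurd ?_ (mem_delta_root.1 hr).1
  obtain ⟨n, hn⟩ := mem_subtree.1 (mem_delta_root.1 hr).2
  rw [← hn, Function.iterate_fixed T.parent_root]

end SFTree

section Cesaro

open Finset Filter Topology Matrix

variable {S : Type*} [Fintype S] [DecidableEq S] {P : Matrix S S ℝ}

noncomputable def cesaroMean (P : Matrix S S ℝ) (c : S → ℝ) (i : S) (n : ℕ) : ℝ :=
  (n : ℝ)⁻¹ * ∑ t ∈ range n, (P ^ t *ᵥ c) i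

lemma abs_mulVec_apply_le (hP : P ∈ rowStochastic ℝ S) (v : S → ℝ) (i : S) :
    |(P *ᵥ v) i| ≤ ‖v‖ := by
  calc |(P *ᵥ v) i| ≤ ∑ j, P i j * |v j| := by
        simpa [mulVec, dotProduct, abs_mul, abs_of_nonneg (nonneg_of_mem_rowStochastic hP)]
          using abs_sum_le_sum_abs (fun j => P i j * v j) univ
    _ ≤ ∑ j, P i j * ‖v‖ := by
        gcongr with j
        · exact nonneg_of_mem_rowStochastic hP
        · exact norm_le_pi_norm v j
    _ = ‖v‖ := by rw [← sum_mul, sum_row_of_mem_rowStochastic hP, one_mul]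

lemma mulVec_const_of_mem_rowStochastic (hP : P ∈ rowStochastic ℝ S) (g : ℝ) :
    P *ᵥ (fun _ => g) = fun _ => g := by
  have : (fun _ : S => g) = g • (1 : S → ℝ) := by ext; simp
  rw [this, mulVec_smul, one_vecMul_of_mem_rowStochastic hP]

-- `r` is the defect of `(g, h)` in the Poisson equation `h = c - g + P h`.
lemma sum_range_pow_mulVec_apply (hP : P ∈ rowStochastic ℝ S) {c h r : S → ℝ} {g : ℝ}
    (hc : ∀ j, c j = g + (h j - (P *ᵥ h) j) + r j) (n : ℕ) (i : S) :
    ∑ t ∈ range n, (P ^ t *ᵥ c) i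
      = n * g + (h i - (P ^ n *ᵥ h) i) + ∑ t ∈ range n, (P ^ t *ᵥ r) i := by
  have hc' : c = (fun _ => g) + (h - P *ᵥ h) + r := funext hc
  have htel : ∀ t, P ^ t *ᵥ (h - P *ᵥ h) = P ^ t *ᵥ h - P ^ (t + 1) *ᵥ h := fun t => by
    rw [mulVec_sub, mulVec_mulVec, pow_succ]
  simp only [hc', mulVec_add, Pi.add_apply, sum_add_distrib, htel,
    mulVec_const_of_mem_rowStochastic (pow_mem hP _), Pi.sub_apply]
  rw [sum_range_sub' (fun t => (P ^ t *ᵥ h) i)]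
  simp

lemma tendsto_const_add_inv_mul_sub_pow_mulVec (hP : P ∈ rowStochastic ℝ S) (g : ℝ)
    (h : S → ℝ) (i : S) :
    Tendsto (fun n : ℕ => g + (n : ℝ)⁻¹ * (h i - (P ^ n *ᵥ h) i)) atTop (𝓝 g) := by
  have herr : Tendsto (fun n : ℕ => (n : ℝ)⁻¹ * (h i - (P ^ n *ᵥ h) i)) atTop (𝓝 0) := by
    refine squeeze_zero_norm (fun n => ?_)
      (by simpa using tendsto_inv_atTop_nhds_zero_nat.mul_const (|h i| + ‖h‖))
    rw [Real.norm_eq_abs, abs_mul, abs_inv, Nat.abs_cast]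
    gcongr
    linarith [abs_sub (h i) ((P ^ n *ᵥ h) i), abs_mulVec_apply_le (pow_mem hP n) h i]
  simpa using herr.const_add g

lemma tendsto_cesaroMean_of_poisson (hP : P ∈ rowStochastic ℝ S) {c h : S → ℝ} {g : ℝ}
    (hpois : ∀ j, c j - g + (P *ᵥ h) j = h j) (i : S) :
    Tendsto (cesaroMean P c i) atTop (𝓝 g) := by
  have hsum := sum_range_pow_mulVec_apply hP (c := c) (h := h) (g := g) (r := 0)
    (fun j => by simp only [Pi.zero_apply]; linarith [hpois j])
  refine (tendsto_const_add_inv_mul_sub_pow_mulVec hP g h i).congr' ?_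
  filter_upwards [eventually_ne_atTop 0] with n hn
  rw [cesaroMean, hsum, mul_add, mul_add, inv_mul_cancel_left₀ (Nat.cast_ne_zero.2 hn)]
  simp

lemma le_limsup_cesaroMean_of_poisson (hP : P ∈ rowStochastic ℝ S) {c h : S → ℝ} {g : ℝ}
    (hpois : ∀ j, h j ≤ c j - g + (P *ᵥ h) j) (i : S) :
    g ≤ limsup (cesaroMean P c i) atTop := by
  have hsum := sum_range_pow_mulVec_apply hP (c := c) (h := h) (g := g)
    (r := fun j => c j - g + (P *ᵥ h) j - h j) (fun j => by ring)
  have hlower : ∀ n : ℕ, n ≠ 0 →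
      g + (n : ℝ)⁻¹ * (h i - (P ^ n *ᵥ h) i) ≤ cesaroMean P c i n := by
    intro n hn
    have hr : 0 ≤ ∑ t ∈ range n, (P ^ t *ᵥ fun j => c j - g + (P *ᵥ h) j - h j) i :=
      sum_nonneg fun t _ => nonneg_mulVec_of_mem_rowStochastic (pow_mem hP t)
        (fun j => by linarith [hpois j]) i
    rw [cesaroMean, hsum n i, mul_add, mul_add, inv_mul_cancel_left₀ (Nat.cast_ne_zero.2 hn)]
    have := mul_nonneg (inv_nonneg.2 (Nat.cast_nonneg (α := ℝ) n)) hr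
    linarith
  have hupper : ∀ n, cesaroMean P c i n ≤ ‖c‖ := by
    intro n
    have hsum_le : ∑ t ∈ range n, (P ^ t *ᵥ c) i ≤ n * ‖c‖ := by
      simpa using sum_le_sum fun t (_ : t ∈ range n) =>
        (le_abs_self _).trans (abs_mulVec_apply_le (pow_mem hP t) c i)
    rcases eq_or_ne n 0 with rfl | hn
    · simp [cesaroMean]
    · rw [cesaroMean, inv_mul_le_iff₀ (by positivity)]
      exact hsum_le
  have hlim := tendsto_const_add_inv_mul_sub_pow_mulVec hP g h i
  rw [← hlim.limsup_eq]
  exact limsup_le_limsup ((eventually_ne_atTop 0).mono hlower)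
    hlim.isBoundedUnder_ge.isCoboundedUnder_le (isBoundedUnder_of ⟨‖c‖, hupper⟩)

end Cesaro

namespace MDP

open Finset Matrix Filter SFTree

variable {S A : Type*} [Fintype S] {M : MDP S A} {T : SFTree S}

lemma avgCost_eq_limsup_cesaroMean [DecidableEq S] (M : MDP S A) (e : S → A) (i : S) :
    M.avgCost e i = limsup (cesaroMean (M.Pmat e) (M.cvec e) i) atTop := rfl

lemma Pmat_mulVec_apply (M : MDP S A) (e : S → A) (v : S → ℝ) (i : S) :
    (M.Pmat e *ᵥ v) i = ∑ j, M.p i (e i) j * v j := rfl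

lemma ptail_nonneg (i : S) (a : A) (k : S) : 0 ≤ M.ptail T i a k :=
  sum_nonneg fun j _ => M.p_nonneg i a j

lemma ptail_eq_zero (hsf : M.IsSkipFree T) {i k : S} (hi : i ≠ T.root)
    (hik : i ∉ T.subtree k) (hki : k ∉ T.subtree i) (a : A) : M.ptail T i a k = 0 := by
  refine sum_eq_zero fun j hj => ?_
  by_contra hp
  rcases hsf i hi a j hp with rfl | hji
  · exact hik (mem_subtree_trans (mem_subtree.2 ⟨1, rfl⟩) hj)
  · exact (mem_subtree_or_mem_subtree hji hj).elim hik hki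

variable [DecidableEq S]

lemma Pmat_mem_rowStochastic (M : MDP S A) (e : S → A) : M.Pmat e ∈ rowStochastic ℝ S :=
  mem_rowStochastic_iff_sum.2 ⟨fun i => M.p_nonneg i (e i), fun i => M.p_sum_one i (e i)⟩

lemma sum_p_eq_one_of_subset (hsf : M.IsSkipFree T) {i : S} (hi : i ≠ T.root) {s : Finset S}
    (hs : insert (T.parent i) (T.subtree i) ⊆ s) (a : A) : ∑ j ∈ s, M.p i a j = 1 := by
  rw [← M.p_sum_one i a]
  refine sum_subset (subset_univ s) fun j _ hj => ?_
  by_contra hp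
  exact hj (hs (mem_insert.2 (hsf i hi a j hp)))

lemma ptail_self (hsf : M.IsSkipFree T) {i : S} (hi : i ≠ T.root) (a : A) :
    M.ptail T i a i = 1 - M.p i a (T.parent i) := by
  have := sum_p_eq_one_of_subset hsf hi subset_rfl a
  rw [sum_insert (parent_not_mem_subtree hi)] at this
  unfold ptail
  linarith

lemma ptail_eq_one (hsf : M.IsSkipFree T) {i k : S} (hi : i ≠ T.root) (hik : i ∈ T.subtree k)
    (hne : i ≠ k) (a : A) : M.ptail T i a k = 1 :=
  sum_p_eq_one_of_subset hsf hi
    (insert_subset (parent_mem_subtree hik hne) fun _ hj => mem_subtree_trans hj hik) a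

noncomputable def descSum (M : MDP S A) (T : SFTree S) (i : S) (a : A) (v : S → ℝ) : ℝ :=
  ∑ k ∈ T.desc i, M.ptail T i a k * v k

lemma descSum_mono {u v : S → ℝ} (i : S) (huv : ∀ k ∈ T.desc i, u k ≤ v k) (a : A) :
    M.descSum T i a u ≤ M.descSum T i a v :=
  sum_le_sum fun k hk => mul_le_mul_of_nonneg_left (huv k hk) (ptail_nonneg i a k)

lemma one_add_descSum_pos {u : S → ℝ} (i : S) (hu : ∀ k ∈ T.desc i, 0 < u k) (a : A) :
    0 < 1 + M.descSum T i a u := by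
  have h0 : 0 ≤ M.descSum T i a u :=
    sum_nonneg fun k hk => mul_nonneg (ptail_nonneg i a k) (hu k hk).le
  linarith

lemma sum_p_mul_pathSum (y : S → ℝ) (i : S) (a : A) :
    ∑ j, M.p i a j * T.pathSum y j = ∑ k ∈ T.desc T.root, M.ptail T i a k * y k := by
  simp only [pathSum, mul_sum]
  rw [sum_comm' (t' := T.desc T.root) (s' := T.subtree)]
  · simp only [ptail, sum_mul]
  · intro j r
    simp [mem_delta_root, mem_desc_root, and_comm]

lemma sum_p_mul_pathSum_root (y : S → ℝ) (a : A) :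
    ∑ j, M.p T.root a j * T.pathSum y j = M.descSum T T.root a y :=
  sum_p_mul_pathSum y T.root a

lemma sum_p_mul_pathSum_of_ne_root (hsf : M.IsSkipFree T) (y : S → ℝ) {i : S}
    (hi : i ≠ T.root) (a : A) :
    ∑ j, M.p i a j * T.pathSum y j
      = T.pathSum y i - M.p i a (T.parent i) * y i + M.descSum T i a y := by
  have hdisj : Disjoint (T.delta T.root i) (T.desc i) := by
    refine disjoint_left.2 fun r hr hr' => (mem_desc.1 hr').1 ?_
    exact eq_of_mem_subtree_of_mem_subtree (mem_desc.1 hr').2 (mem_delta_root.1 hr).2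
  have hsupp : ∑ k ∈ T.desc T.root, M.ptail T i a k * y k
      = ∑ k ∈ T.delta T.root i ∪ T.desc i, M.ptail T i a k * y k := by
    refine (sum_subset (fun r hr => ?_) fun k hk hk' => ?_).symm
    · rcases mem_union.1 hr with h | h
      · exact mem_desc_root.2 (mem_delta_root.1 h).1
      · exact mem_desc_root.2 (ne_root_of_mem_desc h)
    · have hk := mem_desc_root.1 hk
      simp only [mem_union, mem_delta_root, mem_desc, not_or, not_and] at hk'
      have hki : k ∉ T.subtree i := fun h => by
        obtain rfl | hne := eq_or_ne k i
        · exact hk'.1 hk (self_mem_subtree k)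
        · exact hk'.2 hne h
      rw [ptail_eq_zero hsf hi (hk'.1 hk) hki, zero_mul]
  have hpath : ∑ k ∈ T.delta T.root i, M.ptail T i a k * y k
      = T.pathSum y i - M.p i a (T.parent i) * y i := by
    have hterm : ∀ r ∈ T.delta T.root i, M.ptail T i a r * y r
        = y r - if r = i then M.p i a (T.parent i) * y i else 0 := by
      intro r hr
      by_cases hri : r = i
      · subst hri
        rw [ptail_self hsf hi, if_pos rfl]
        ring
      · rw [ptail_eq_one hsf hi (mem_delta_root.1 hr).2 (Ne.symm hri), if_neg hri]
        ring
    rw [sum_congr rfl hterm, sum_sub_distrib, sum_ite_eq',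
      if_pos (mem_delta_root.2 ⟨hi, self_mem_subtree i⟩), pathSum]
  rw [sum_p_mul_pathSum, hsupp, sum_union hdisj, hpath, descSum]

variable {x : ℝ}

theorem avgCost_root_eq (hsf : M.IsSkipFree T)
    (hpar : ∀ i ≠ T.root, ∀ a : A, 0 < M.p i a (T.parent i)) (e : S → A) {Y U : S → ℝ}
    (hY : ∀ i ≠ T.root,
      Y i = (M.c i (e i) - x + M.descSum T i (e i) Y) / M.p i (e i) (T.parent i))
    (hU : ∀ i ≠ T.root, U i = (1 + M.descSum T i (e i) U) / M.p i (e i) (T.parent i))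
    (hτ : 1 + M.descSum T T.root (e T.root) U ≠ 0) :
    M.avgCost e T.root = x + (M.c T.root (e T.root) - x + M.descSum T T.root (e T.root) Y)
      / (1 + M.descSum T T.root (e T.root) U) := by
  obtain ⟨r, hr⟩ : ∃ r, r = (M.c T.root (e T.root) - x + M.descSum T T.root (e T.root) Y)
      / (1 + M.descSum T T.root (e T.root) U) := ⟨_, rfl⟩
  rw [← hr, avgCost_eq_limsup_cesaroMean]
  refine (tendsto_cesaroMean_of_poisson (M.Pmat_mem_rowStochastic e)
    (h := fun j => T.pathSum Y j - r * T.pathSum U j) (fun i => ?_) T.root).limsup_eq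
  have hmul : ∀ j, M.p i (e i) j * (T.pathSum Y j - r * T.pathSum U j)
      = M.p i (e i) j * T.pathSum Y j - r * (M.p i (e i) j * T.pathSum U j) := fun j => by ring
  rw [Pmat_mulVec_apply, sum_congr rfl fun j _ => hmul j, sum_sub_distrib, ← mul_sum, cvec]
  obtain rfl | hi := eq_or_ne i T.root
  · rw [sum_p_mul_pathSum_root, sum_p_mul_pathSum_root, pathSum_root, pathSum_root]
    have hrτ : r * (1 + M.descSum T T.root (e T.root) U)
        = M.c T.root (e T.root) - x + M.descSum T T.root (e T.root) Y := by
      rw [hr, div_mul_cancel₀ _ hτ]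
    linear_combination -hrτ
  · rw [sum_p_mul_pathSum_of_ne_root hsf _ hi, sum_p_mul_pathSum_of_ne_root hsf _ hi]
    have hYi := hY i hi
    have hUi := hU i hi
    rw [eq_div_iff (hpar i hi (e i)).ne'] at hYi hUi
    linear_combination r * hUi - hYi

theorem le_avgCost_of_root_bias_nonneg (hsf : M.IsSkipFree T)
    (hpar : ∀ i ≠ T.root, ∀ a : A, 0 < M.p i a (T.parent i)) {y : S → ℝ}
    (hy : ∀ i ≠ T.root, ∀ a, y i ≤ (M.c i a - x + M.descSum T i a y) / M.p i a (T.parent i))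
    (hroot : ∀ a, 0 ≤ M.c T.root a - x + M.descSum T T.root a y) (e : S → A) :
    x ≤ M.avgCost e T.root := by
  rw [avgCost_eq_limsup_cesaroMean]
  refine le_limsup_cesaroMean_of_poisson (M.Pmat_mem_rowStochastic e) (h := T.pathSum y)
    (fun i => ?_) T.root
  rw [Pmat_mulVec_apply, cvec]
  obtain rfl | hi := eq_or_ne i T.root
  · rw [sum_p_mul_pathSum_root, pathSum_root]
    linarith [hroot (e T.root)]
  · rw [sum_p_mul_pathSum_of_ne_root hsf _ hi]
    have hyi := hy i hi (e i)
    rw [le_div_iff₀ (hpar i hi (e i))] at hyi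
    linarith

lemma pos_of_eq_one_add_descSum_div (hpar : ∀ i ≠ T.root, ∀ a : A, 0 < M.p i a (T.parent i))
    {e : S → A} {u : S → ℝ}
    (hu : ∀ i ≠ T.root, u i = (1 + M.descSum T i (e i) u) / M.p i (e i) (T.parent i)) :
    ∀ i ≠ T.root, 0 < u i := by
  refine T.desc_induction fun i ih hi => ?_
  rw [hu i hi]
  exact div_pos (one_add_descSum_pos i (fun k hk => ih k hk (ne_root_of_mem_desc hk)) (e i))
    (hpar i hi (e i))

lemma one_add_descSum_root_pos (hpar : ∀ i ≠ T.root, ∀ a : A, 0 < M.p i a (T.parent i))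
    {e : S → A} {u : S → ℝ}
    (hu : ∀ i ≠ T.root, u i = (1 + M.descSum T i (e i) u) / M.p i (e i) (T.parent i)) (a : A) :
    0 < 1 + M.descSum T T.root a u :=
  one_add_descSum_pos T.root
    (fun k hk => pos_of_eq_one_add_descSum_div hpar hu k (ne_root_of_mem_desc hk)) a

theorem avgCost_root_eq_of_eq_off_root (hsf : M.IsSkipFree T)
    (hpar : ∀ i ≠ T.root, ∀ a : A, 0 < M.p i a (T.parent i)) {y t : S → ℝ} {σ : S → A}
    (hy : ∀ i ≠ T.root,
      (M.c i (σ i) - x + M.descSum T i (σ i) y) / M.p i (σ i) (T.parent i) = y i)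
    (ht : ∀ i ≠ T.root, t i = (1 + M.descSum T i (σ i) t) / M.p i (σ i) (T.parent i))
    {e : S → A} (he : ∀ i ≠ T.root, e i = σ i) :
    M.avgCost e T.root = x + (M.c T.root (e T.root) - x + M.descSum T T.root (e T.root) y)
      / (1 + M.descSum T T.root (e T.root) t) := by
  refine avgCost_root_eq hsf hpar e (fun i hi => ?_) (fun i hi => ?_)
    (one_add_descSum_root_pos hpar ht _).ne'
  · rw [he i hi, hy i hi]
  · rw [he i hi, ← ht i hi]

-- The recursions defining `y` and `t` in the theorem, evaluated along the policy `e`.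
noncomputable def downRec (M : MDP S A) (T : SFTree S) (e : S → A) (f : S → ℝ) (i : S) : ℝ :=
  (f i + ∑ k ∈ (T.desc i).attach, M.ptail T i (e i) k * M.downRec T e f k)
    / M.p i (e i) (T.parent i)
termination_by (T.desc i).card
decreasing_by exact card_desc_lt k.2

lemma downRec_eq (e : S → A) (f : S → ℝ) (i : S) :
    M.downRec T e f i
      = (f i + M.descSum T i (e i) (M.downRec T e f)) / M.p i (e i) (T.parent i) := by
  rw [downRec, descSum, ← sum_attach (T.desc i)]

lemma le_downRec (hpar : ∀ i ≠ T.root, ∀ a : A, 0 < M.p i a (T.parent i)) {e : S → A}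
    {f u : S → ℝ}
    (hu : ∀ i ≠ T.root, u i ≤ (f i + M.descSum T i (e i) u) / M.p i (e i) (T.parent i)) :
    ∀ i ≠ T.root, u i ≤ M.downRec T e f i := by
  refine T.desc_induction fun i ih hi => (hu i hi).trans ?_
  rw [downRec_eq]
  gcongr ?_ / _
  · exact (hpar i hi (e i)).le
  · linarith [descSum_mono (M := M) i (fun k hk => ih k hk (ne_root_of_mem_desc hk)) (e i)]

theorem root_bias_nonpos_of_eq_avgCost (hsf : M.IsSkipFree T)
    (hpar : ∀ i ≠ T.root, ∀ a : A, 0 < M.p i a (T.parent i)) {d : S → A}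
    (hx : x = M.avgCost d T.root) {y : S → ℝ}
    (hy : ∀ i ≠ T.root, ∀ a, y i ≤ (M.c i a - x + M.descSum T i a y) / M.p i a (T.parent i)) :
    M.c T.root (d T.root) - x + M.descSum T T.root (d T.root) y ≤ 0 := by
  set Y := M.downRec T d fun i => M.c i (d i) - x
  have hτ := one_add_descSum_root_pos hpar (fun i _ => downRec_eq (M := M) (T := T) d 1 i)
    (d T.root)
  have hg := avgCost_root_eq hsf hpar d (fun i _ => downRec_eq d (fun i => M.c i (d i) - x) i)
    (fun i _ => downRec_eq d 1 i) hτ.ne'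
  have hBY : M.c T.root (d T.root) - x + M.descSum T T.root (d T.root) Y = 0 := by
    rw [← hx, left_eq_add, div_eq_zero_iff] at hg
    exact hg.resolve_right hτ.ne'
  have hyY := le_downRec hpar fun i hi => hy i hi (d i)
  linarith [descSum_mono (M := M) T.root (fun k hk => hyY k (ne_root_of_mem_desc hk)) (d T.root)]

end MDP

section ArgminRatio

variable {ι : Type*} [Finite ι] {f D : ι → ℝ} {a₀ : ι}

lemma div_le_of_eq_ciInf (h : f a₀ / D a₀ = ⨅ a, f a / D a) (a : ι) :
    f a₀ / D a₀ ≤ f a / D a :=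
  h ▸ ciInf_le (Set.finite_range _).bddBelow a

lemma neg_of_div_eq_ciInf (hD : ∀ a, 0 < D a) (h : f a₀ / D a₀ = ⨅ a, f a / D a) {a : ι}
    (ha : f a < 0) : f a₀ < 0 := by
  have := (div_le_of_eq_ciInf h a).trans_lt (div_neg_of_neg_of_pos ha (hD a))
  rwa [div_lt_iff₀ (hD a₀), zero_mul] at this

lemma nonpos_of_div_eq_ciInf (hD : ∀ a, 0 < D a) (h : f a₀ / D a₀ = ⨅ a, f a / D a) {a : ι}
    (ha : f a ≤ 0) : f a₀ ≤ 0 := by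
  have := (div_le_of_eq_ciInf h a).trans (div_nonpos_of_nonpos_of_nonneg ha (hD a).le)
  rwa [div_le_iff₀ (hD a₀), zero_mul] at this

end ArgminRatio

theorem stmt9_general {S A : Type*} [Fintype S] [DecidableEq S] [Fintype A]
    (T : SFTree S) (M : MDP S A)
    (hsf : M.IsSkipFree T)
    (h00 : ∀ a : A, M.p T.root a T.root < 1)
    (hpar : ∀ i, i ≠ T.root → ∀ a : A, 0 < M.p i a (T.parent i))
    (d : S → A) (x : ℝ) (hx : x = M.avgCost d T.root)
    (y t : S → ℝ) (aSel : S → A)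
    (hy : ∀ i, i ≠ T.root →
      y i = ⨅ a : A, (M.c i a - x + ∑ k ∈ T.desc i, M.ptail T i a k * y k)
          / M.p i a (T.parent i))
    (ha : ∀ i, i ≠ T.root →
      (M.c i (aSel i) - x + ∑ k ∈ T.desc i, M.ptail T i (aSel i) k * y k)
          / M.p i (aSel i) (T.parent i) = y i)
    (ht : ∀ i, i ≠ T.root →
      t i = (1 + ∑ k ∈ T.desc i, M.ptail T i (aSel i) k * t k) / M.p i (aSel i) (T.parent i))
    (a01 a02 a03 : A)
    (h1 : (M.c T.root a01 - x + ∑ k ∈ T.desc T.root, M.ptail T T.root a01 k * y k)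
          / (1 - M.p T.root a01 T.root)
        = ⨅ a : A, (M.c T.root a - x + ∑ k ∈ T.desc T.root, M.ptail T T.root a k * y k)
          / (1 - M.p T.root a T.root))
    (h2 : (M.c T.root a02 - x + ∑ k ∈ T.desc T.root, M.ptail T T.root a02 k * y k)
        = ⨅ a : A, (M.c T.root a - x + ∑ k ∈ T.desc T.root, M.ptail T T.root a k * y k))
    (h3 : (M.c T.root a03 - x + ∑ k ∈ T.desc T.root, M.ptail T T.root a03 k * y k)
          / (1 + ∑ k ∈ T.desc T.root, M.ptail T T.root a03 k * t k)
        = ⨅ a : A, (M.c T.root a - x + ∑ k ∈ T.desc T.root, M.ptail T T.root a k * y k)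
          / (1 + ∑ k ∈ T.desc T.root, M.ptail T T.root a k * t k))
    (d1 d2 d3 : S → A)
    (hd1 : d1 T.root = a01 ∧ ∀ i, i ≠ T.root → d1 i = aSel i)
    (hd2 : d2 T.root = a02 ∧ ∀ i, i ≠ T.root → d2 i = aSel i)
    (hd3 : d3 T.root = a03 ∧ ∀ i, i ≠ T.root → d3 i = aSel i) :
    (M.avgCost d1 T.root < M.avgCost d T.root
      ∧ M.avgCost d2 T.root < M.avgCost d T.root
      ∧ M.avgCost d3 T.root < M.avgCost d T.root)
    ∨ (M.avgCost d1 T.root = M.avgCost d T.root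
      ∧ M.avgCost d2 T.root = M.avgCost d T.root
      ∧ M.avgCost d3 T.root = M.avgCost d T.root
      ∧ (∀ d' : S → A, M.avgCost d T.root ≤ M.avgCost d' T.root)
      ∧ (∀ d' : S → A, M.avgCost d1 T.root ≤ M.avgCost d' T.root)
      ∧ (∀ d' : S → A, M.avgCost d2 T.root ≤ M.avgCost d' T.root)
      ∧ (∀ d' : S → A, M.avgCost d3 T.root ≤ M.avgCost d' T.root)) := by
  set B : A → ℝ := fun a => M.c T.root a - x + M.descSum T T.root a y
  set τ : A → ℝ := fun a => 1 + M.descSum T T.root a t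
  have hymin : ∀ i ≠ T.root, ∀ a,
      y i ≤ (M.c i a - x + M.descSum T i a y) / M.p i a (T.parent i) := fun i hi a =>
    hy i hi ▸ ciInf_le (Set.finite_range _).bddBelow a
  have hτ : ∀ a, 0 < τ a := MDP.one_add_descSum_root_pos hpar ht
  have h1pos : ∀ a, 0 < 1 - M.p T.root a T.root := fun a => sub_pos.2 (h00 a)
  have hB2 : ∀ a, B a02 ≤ B a := fun a => h2.trans_le (ciInf_le (Set.finite_range B).bddBelow a)
  have hBd : B (d T.root) ≤ 0 := MDP.root_bias_nonpos_of_eq_avgCost hsf hpar hx hymin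
  have hg : ∀ e : S → A, (∀ i ≠ T.root, e i = aSel i) →
      M.avgCost e T.root = x + B (e T.root) / τ (e T.root) :=
    fun e => MDP.avgCost_root_eq_of_eq_off_root hsf hpar ha ht
  rw [hg d1 hd1.2, hg d2 hd2.2, hg d3 hd3.2, hd1.1, hd2.1, hd3.1, ← hx]
  rcases lt_or_ge (B a02) 0 with hneg | hnonneg
  · have hB1 := neg_of_div_eq_ciInf h1pos h1 hneg
    have hB3 := neg_of_div_eq_ciInf hτ h3 hneg
    refine Or.inl ⟨?_, ?_, ?_⟩
    · linarith [div_neg_of_neg_of_pos hB1 (hτ a01)]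
    · linarith [div_neg_of_neg_of_pos hneg (hτ a02)]
    · linarith [div_neg_of_neg_of_pos hB3 (hτ a03)]
  · have hB02 : B a02 = 0 := le_antisymm ((hB2 _).trans hBd) hnonneg
    have hB01 : B a01 = 0 :=
      le_antisymm (nonpos_of_div_eq_ciInf h1pos h1 hB02.le) (hnonneg.trans (hB2 a01))
    have hB03 : B a03 = 0 :=
      le_antisymm (nonpos_of_div_eq_ciInf hτ h3 hB02.le) (hnonneg.trans (hB2 a03))
    have hopt := MDP.le_avgCost_of_root_bias_nonneg hsf hpar hymin fun a => hnonneg.trans (hB2 a)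
    simp only [hB01, hB02, hB03, zero_div, add_zero, true_and]
    exact Or.inr ⟨hopt, hopt, hopt, hopt⟩

/-- for a finite recurrent skip-free MDP on a tree, `x = g(d)`, and the three
choices `a₀¹, a₀², a₀³` of root action (minimising respectively the first-return ratio, the
root optimality-equation expression, and the average-cost ratio), the three updated policies
`d¹, d², d³` either all strictly improve on `d`, or all have the same average cost as `d`
and each (and `d` itself) is average cost optimal. -/
theorem stmt9 {S A : Type*} [Fintype S] [DecidableEq S] [Fintype A] [Nonempty A]
    (T : SFTree S) (M : MDP S A)
    (hsf : M.IsSkipFree T) (hrec : IsRecurrentModel M)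
    (h00 : ∀ a : A, M.p T.root a T.root < 1)
    (hpar : ∀ i, i ≠ T.root → ∀ a : A, 0 < M.p i a (T.parent i))
    (d : S → A) (x : ℝ) (hx : x = M.avgCost d T.root)
    (y t : S → ℝ) (aSel : S → A)
    (hy : ∀ i, i ≠ T.root →
      y i = ⨅ a : A, (M.c i a - x + ∑ k ∈ T.desc i, M.ptail T i a k * y k)
          / M.p i a (T.parent i))
    (ha : ∀ i, i ≠ T.root →
      (M.c i (aSel i) - x + ∑ k ∈ T.desc i, M.ptail T i (aSel i) k * y k)
          / M.p i (aSel i) (T.parent i) = y i)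
    (ht : ∀ i, i ≠ T.root →
      t i = (1 + ∑ k ∈ T.desc i, M.ptail T i (aSel i) k * t k) / M.p i (aSel i) (T.parent i))
    (a01 a02 a03 : A)
    (h1 : (M.c T.root a01 - x + ∑ k ∈ T.desc T.root, M.ptail T T.root a01 k * y k)
          / (1 - M.p T.root a01 T.root)
        = ⨅ a : A, (M.c T.root a - x + ∑ k ∈ T.desc T.root, M.ptail T T.root a k * y k)
          / (1 - M.p T.root a T.root))
    (h2 : (M.c T.root a02 - x + ∑ k ∈ T.desc T.root, M.ptail T T.root a02 k * y k)
        = ⨅ a : A, (M.c T.root a - x + ∑ k ∈ T.desc T.root, M.ptail T T.root a k * y k))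
    (h3 : (M.c T.root a03 - x + ∑ k ∈ T.desc T.root, M.ptail T T.root a03 k * y k)
          / (1 + ∑ k ∈ T.desc T.root, M.ptail T T.root a03 k * t k)
        = ⨅ a : A, (M.c T.root a - x + ∑ k ∈ T.desc T.root, M.ptail T T.root a k * y k)
          / (1 + ∑ k ∈ T.desc T.root, M.ptail T T.root a k * t k))
    (d1 d2 d3 : S → A)
    (hd1 : d1 T.root = a01 ∧ ∀ i, i ≠ T.root → d1 i = aSel i)
    (hd2 : d2 T.root = a02 ∧ ∀ i, i ≠ T.root → d2 i = aSel i)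
    (hd3 : d3 T.root = a03 ∧ ∀ i, i ≠ T.root → d3 i = aSel i) :
    (M.avgCost d1 T.root < M.avgCost d T.root
      ∧ M.avgCost d2 T.root < M.avgCost d T.root
      ∧ M.avgCost d3 T.root < M.avgCost d T.root)
    ∨ (M.avgCost d1 T.root = M.avgCost d T.root
      ∧ M.avgCost d2 T.root = M.avgCost d T.root
      ∧ M.avgCost d3 T.root = M.avgCost d T.root
      ∧ (∀ d' : S → A, M.avgCost d T.root ≤ M.avgCost d' T.root)
      ∧ (∀ d' : S → A, M.avgCost d1 T.root ≤ M.avgCost d' T.root)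
      ∧ (∀ d' : S → A, M.avgCost d2 T.root ≤ M.avgCost d' T.root)
      ∧ (∀ d' : S → A, M.avgCost d3 T.root ≤ M.avgCost d' T.root)) :=
  stmt9_general T M hsf h00 hpar d x hx y t aSel hy ha ht a01 a02 a03 h1 h2 h3 d1 d2 d3 hd1 hd2 hd3
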